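/- arXiv:1502.05834 — 2 statements merged into one kernel-verified Lean document; each statement's English description precedes it below -/
import Mathlib

section
/- Let M be a model based on a 2-frame (W,R0,R1). Then the defined operator ◆0 behaves like a modal diamond with respect to the tick-relation R̄0^M: for every bimodal formula ψ and every x ∈ W, M,x ⊨ ◆0ψ if and only if there exists y ∈ W with x R̄0^M y and M,y ⊨ ψ. -/
set_option linter.unusedVariables false

/-! ### Unimodal syntax -/

/-- Unimodal formulas: propositional variables, falsum, implication and one box.
Other Booleans and the diamond are defined from these. -/
inductive UForm : Type
  | var : ℕ → UForm
  | bot : UForm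
  | imp : UForm → UForm → UForm
  | box : UForm → UForm

namespace UForm
def neg (φ : UForm) : UForm := imp φ bot
def dia (φ : UForm) : UForm := neg (box (neg φ))
end UForm

/-! ### Bimodal syntax -/

/-- Bimodal formulas: propositional variables, falsum, implication and boxes `□0`, `□1`. -/
inductive BForm : Type
  | var : ℕ → BForm
  | bot : BForm
  | imp : BForm → BForm → BForm
  | box : Fin 2 → BForm → BForm

namespace BForm
def neg (φ : BForm) : BForm := imp φ bot
def top : BForm := neg bot
def and (φ ψ : BForm) : BForm := neg (imp φ (neg ψ))
def or (φ ψ : BForm) : BForm := imp (neg φ) ψ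
def dia (i : Fin 2) (φ : BForm) : BForm := neg (box i (neg φ))

/-- Substitution of formulas for propositional variables. -/
def subst (s : ℕ → BForm) : BForm → BForm
  | var n => s n
  | bot => bot
  | imp φ ψ => imp (subst s φ) (subst s ψ)
  | box i φ => box i (subst s φ)
end BForm

/-- Embedding of unimodal formulas into bimodal ones, reading the unimodal box as `□i`. -/
def UForm.embed (i : Fin 2) : UForm → BForm
  | var n => .var n
  | bot => .bot
  | imp φ ψ => .imp (embed i φ) (embed i ψ)
  | box φ => .box i (embed i φ)

/-! ### Frames and semantics -/

/-- A unimodal Kripke frame: a nonempty set with a binary relation. -/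
structure Frame1 : Type 1 where
  W : Type
  ne : Nonempty W
  R : W → W → Prop

/-- Truth of a unimodal formula at a point of a model based on a unimodal frame. -/
def UTruth (F : Frame1) (V : ℕ → F.W → Prop) : F.W → UForm → Prop
  | w, .var n => V n w
  | _, .bot => False
  | w, .imp φ ψ => UTruth F V w φ → UTruth F V w ψ
  | w, .box φ => ∀ v, F.R w v → UTruth F V v φ

/-- Validity of a unimodal formula in a unimodal frame. -/
def UValid (F : Frame1) (φ : UForm) : Prop := ∀ V w, UTruth F V w φ

/-- `F` is a frame for the set `L` of unimodal formulas. -/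
def UFrameFor (F : Frame1) (L : Set UForm) : Prop := ∀ φ ∈ L, UValid F φ

/-- The unimodal logic determined by a class of unimodal frames. -/
def ULog (C : Set Frame1) : Set UForm := { φ | ∀ F ∈ C, UValid F φ }

/-- The unimodal logic of a single unimodal frame. -/
def LogOf (F : Frame1) : Set UForm := { φ | UValid F φ }

/-- A 2-frame: a nonempty set with two binary relations `R 0` and `R 1`. -/
structure Frame2 : Type 1 where
  W : Type
  ne : Nonempty W
  R : Fin 2 → W → W → Prop

/-- Truth of a bimodal formula at a point of a model based on a 2-frame. -/
def BTruth (F : Frame2) (V : ℕ → F.W → Prop) : F.W → BForm → Prop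
  | w, .var n => V n w
  | _, .bot => False
  | w, .imp φ ψ => BTruth F V w φ → BTruth F V w ψ
  | w, .box i φ => ∀ v, F.R i w v → BTruth F V v φ

/-- Validity of a bimodal formula in a 2-frame. -/
def BValid (F : Frame2) (φ : BForm) : Prop := ∀ V w, BTruth F V w φ

/-- `F` is a frame for the set `L` of bimodal formulas. -/
def FrameFor (F : Frame2) (L : Set BForm) : Prop := ∀ φ ∈ L, BValid F φ

/-! ### Normal bimodal logics -/

/-- `φ` is a propositional tautology: it is true under every assignment of truth values
to formulas that respects `⊥` and `→` (so variables and boxed formulas act as atoms). -/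
def BTaut (φ : BForm) : Prop :=
  ∀ v : BForm → Prop, (¬ v .bot) → (∀ a b, v (.imp a b) ↔ (v a → v b)) → v φ

/-- A normal bimodal logic: contains all propositional tautologies and the K-axioms for
both boxes, and is closed under modus ponens, substitution and necessitation. -/
structure IsLogic (L : Set BForm) : Prop where
  taut : ∀ φ, BTaut φ → φ ∈ L
  kax : ∀ (i : Fin 2) (φ ψ : BForm),
    BForm.imp (.box i (.imp φ ψ)) (.imp (.box i φ) (.box i ψ)) ∈ L
  mp : ∀ φ ψ, BForm.imp φ ψ ∈ L → φ ∈ L → ψ ∈ L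
  subst : ∀ φ s, φ ∈ L → BForm.subst s φ ∈ L
  nec : ∀ (i : Fin 2) (φ : BForm), φ ∈ L → BForm.box i φ ∈ L

/-- The smallest normal bimodal logic containing a given set of bimodal formulas. -/
def SmallestLogic (S : Set BForm) : Set BForm := ⋂₀ { L : Set BForm | IsLogic L ∧ S ⊆ L }

/-- The fusion `L0 ⊕ L1`: the smallest normal bimodal logic containing `L0` (in `□0`)
and `L1` (in `□1`). -/
def Fusion (L0 L1 : Set UForm) : Set BForm :=
  SmallestLogic ((UForm.embed 0 '' L0) ∪ (UForm.embed 1 '' L1))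

/-- Left commutativity axiom `□1□0 p → □0□1 p`. -/
def lcomAx : BForm := .imp (.box 1 (.box 0 (.var 0))) (.box 0 (.box 1 (.var 0)))

/-- Right commutativity axiom `□0□1 p → □1□0 p`. -/
def rcomAx : BForm := .imp (.box 0 (.box 1 (.var 0))) (.box 1 (.box 0 (.var 0)))

/-- Confluence axiom `◇0□1 p → □1◇0 p`. -/
def confAx : BForm := .imp (.dia 0 (.box 1 (.var 0))) (.box 1 (.dia 0 (.var 0)))

/-- The commutator `[L0, L1]`: the smallest normal bimodal logic containing the fusion
together with the two commutativity axioms and the confluence axiom. -/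
def Commutator (L0 L1 : Set UForm) : Set BForm :=
  SmallestLogic ((UForm.embed 0 '' L0) ∪ (UForm.embed 1 '' L1) ∪ {lcomAx, rcomAx, confAx})

/-- `[L0, L1]^lcom`: the smallest normal bimodal logic containing the fusion together
with the left commutativity axiom only. -/
def CommutatorLcom (L0 L1 : Set UForm) : Set BForm :=
  SmallestLogic ((UForm.embed 0 '' L0) ∪ (UForm.embed 1 '' L1) ∪ {lcomAx})

/-- A normal bimodal logic has the finite model property if every bimodal formula not in
`L` fails at some point of a model based on a finite frame for `L`. -/
def HasFMP (L : Set BForm) : Prop :=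
  ∀ φ, φ ∉ L → ∃ F : Frame2, Finite F.W ∧ FrameFor F L ∧ ∃ V w, ¬ BTruth F V w φ

/-! ### Products -/

/-- The product of two unimodal frames. -/
def prodFrame (F0 F1 : Frame1) : Frame2 where
  W := F0.W × F1.W
  ne := F0.ne.elim fun a => F1.ne.elim fun b => ⟨(a, b)⟩
  R := fun i a b =>
    if i = 0 then F0.R a.1 b.1 ∧ a.2 = b.2 else F1.R a.2 b.2 ∧ a.1 = b.1

/-- The product logic `L0 × L1` of two (Kripke complete) unimodal logics: the set of
bimodal formulas valid in every product of a frame for `L0` with a frame for `L1`. -/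
def ProdLogic (L0 L1 : Set UForm) : Set BForm :=
  { φ | ∀ F0 F1 : Frame1, UFrameFor F0 L0 → UFrameFor F1 L1 →
      BValid (prodFrame F0 F1) φ }

/-! ### Relation properties and particular unimodal logics -/

/-- Weak connectedness. -/
def WeaklyConnected {W : Type*} (R : W → W → Prop) : Prop :=
  ∀ x y z, R x y → R x z → y = z ∨ R y z ∨ R z y

/-- Pseudo-transitivity. -/
def PseudoTransitive {W : Type*} (R : W → W → Prop) : Prop :=
  ∀ x y z, R x y → R y z → x = z ∨ R x z

/-- `K`: the unimodal logic determined by all frames. -/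
def LogicK : Set UForm := ULog Set.univ

/-- `K3`: the unimodal logic determined by all weakly connected frames. -/
def LogicK3 : Set UForm := ULog { F | WeaklyConnected F.R }

/-- `K4.3`: the unimodal logic determined by all transitive weakly connected frames. -/
def LogicK43 : Set UForm := ULog { F | Transitive F.R ∧ WeaklyConnected F.R }

/-- `S4.3`: the logic determined by all reflexive transitive weakly connected frames. -/
def LogicS43 : Set UForm :=
  ULog { F | Reflexive F.R ∧ Transitive F.R ∧ WeaklyConnected F.R }

/-- `S5`: the unimodal logic determined by all equivalence frames. -/
def LogicS5 : Set UForm := ULog { F | Equivalence F.R }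

/-- `Diff`: the unimodal logic determined by all difference frames `(W, ≠)`. -/
def LogicDiff : Set UForm := ULog { F | ∀ a b, F.R a b ↔ a ≠ b }

/-- `K4⁻`: the unimodal logic determined by all pseudo-transitive frames. -/
def LogicK4minus : Set UForm := ULog { F | PseudoTransitive F.R }

/-- The frame `(ω + 1, >)` on `{0, 1, 2, …, ω}`. -/
def omegaSuccGt : Frame1 := ⟨WithTop ℕ, ⟨⊤⟩, fun a b => b < a⟩

/-- The difference frame `(ω, ≠)`. -/
def omegaNeq : Frame1 := ⟨ℕ, ⟨0⟩, fun a b => a ≠ b⟩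

/-- The frame `(ω, <)`. -/
def omegaLt : Frame1 := ⟨ℕ, ⟨0⟩, fun a b => a < b⟩

/-- The frame `(ω, ≤)`. -/
def omegaLe : Frame1 := ⟨ℕ, ⟨0⟩, fun a b => a ≤ b⟩

/-- The frame `(ℚ, <)`. -/
def ratLt : Frame1 := ⟨ℚ, ⟨0⟩, fun a b => a < b⟩

/-- A unimodal frame is one-step rooted if some point sees every other point in one step. -/
def OneStepRooted (F : Frame1) : Prop := ∃ r : F.W, ∀ w : F.W, w ≠ r → F.R r w

/-- `F` contains an `(ω + 1, >)`-type chain: there are distinct points `x n` for `n ≤ ω`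
such that for `n ≠ m`, `x n` is related to `x m` iff `n > m`. -/
def ContainsOmegaSuccChain (F : Frame1) : Prop :=
  ∃ x : WithTop ℕ → F.W, Function.Injective x ∧
    ∀ n m : WithTop ℕ, n ≠ m → (F.R (x n) (x m) ↔ m < n)

/-- (lcom) for a 2-frame. -/
def Lcom (F : Frame2) : Prop :=
  ∀ x y z : F.W, F.R 0 x y → F.R 1 y z → ∃ u, F.R 1 x u ∧ F.R 0 u z

/-- (rcom) for a 2-frame. -/
def Rcom (F : Frame2) : Prop :=
  ∀ x y z : F.W, F.R 1 x y → F.R 0 y z → ∃ u, F.R 0 x u ∧ F.R 1 u z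

/-- (conf) for a 2-frame. -/
def Conf (F : Frame2) : Prop :=
  ∀ x y z : F.W, F.R 1 x y → F.R 0 x z → ∃ u, F.R 0 y u ∧ F.R 1 z u

/-! ### The tick trick -/

/-- The fixed propositional variable `t`. -/
def tV : BForm := .var 1

/-- The tick-relation `R̄0^M`: `x R̄0^M y` iff there is `z` with `x R0 z`, the truth value
of `t` flips from `x` to `z`, and `z = y` or `z R0 y`. -/
def tickRel (F : Frame2) (V : ℕ → F.W → Prop) (x y : F.W) : Prop :=
  ∃ z, F.R 0 x z ∧ (BTruth F V x tV ↔ ¬ BTruth F V z tV) ∧ (z = y ∨ F.R 0 z y)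

/-- The defined diamond
`◆0ψ = [t → ◇0(¬t ∧ (ψ ∨ ◇0ψ))] ∧ [¬t → ◇0(t ∧ (ψ ∨ ◇0ψ))]`. -/
def blackDia (ψ : BForm) : BForm :=
  .and (.imp tV (.dia 0 (.and (.neg tV) (.or ψ (.dia 0 ψ)))))
    (.imp (.neg tV) (.dia 0 (.and tV (.or ψ (.dia 0 ψ)))))

/-- The defined box `■0ψ = ¬◆0¬ψ`. -/
def blackBox (ψ : BForm) : BForm := .neg (blackDia (.neg ψ))

/-- The tick axiom `(t ∨ ◇1 t → t ∧ □1 t) ∧ □0(t ∨ ◇1 t → t ∧ □1 t)`. -/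
def tickAx : BForm :=
  .and (.imp (.or tV (.dia 1 tV)) (.and tV (.box 1 tV)))
    (.box 0 (.imp (.or tV (.dia 1 tV)) (.and tV (.box 1 tV))))


section Semantics

variable {F : Frame2} {V : ℕ → F.W → Prop} {w : F.W}

@[simp]
lemma bTruth_neg (φ : BForm) : BTruth F V w (.neg φ) ↔ ¬ BTruth F V w φ := Iff.rfl

@[simp]
lemma bTruth_imp (φ ψ : BForm) :
    BTruth F V w (.imp φ ψ) ↔ (BTruth F V w φ → BTruth F V w ψ) := Iff.rfl

@[simp]
lemma bTruth_and (φ ψ : BForm) :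
    BTruth F V w (.and φ ψ) ↔ BTruth F V w φ ∧ BTruth F V w ψ := by
  simp [BForm.and, BTruth]

@[simp]
lemma bTruth_or (φ ψ : BForm) :
    BTruth F V w (.or φ ψ) ↔ BTruth F V w φ ∨ BTruth F V w ψ := by
  simp [BForm.or, or_iff_not_imp_left]

@[simp]
lemma bTruth_dia (i : Fin 2) (φ : BForm) :
    BTruth F V w (.dia i φ) ↔ ∃ v, F.R i w v ∧ BTruth F V v φ := by
  simp [BForm.dia, BTruth]

lemma bTruth_or_dia (i : Fin 2) (φ : BForm) :
    BTruth F V w (.or φ (.dia i φ)) ↔ ∃ v, (w = v ∨ F.R i w v) ∧ BTruth F V v φ := by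
  simp only [bTruth_or, bTruth_dia, or_and_right, exists_or, exists_eq_left']

/-- The two conjuncts of `blackDia` are the two cases of the truth value of `t` at `w`. -/
lemma bTruth_blackDia (ψ : BForm) :
    BTruth F V w (blackDia ψ) ↔ ∃ z, F.R 0 w z ∧ (BTruth F V w tV ↔ ¬ BTruth F V z tV) ∧
      BTruth F V z (.or ψ (.dia 0 ψ)) := by
  by_cases ht : BTruth F V w tV <;> simp [blackDia, ht]

end Semantics

/-- `◆0` behaves like a modal diamond with respect to the tick-relation `R̄0^M`. -/
theorem blackDia_iff_tickRel (F : Frame2) (V : ℕ → F.W → Prop)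
    (ψ : BForm) (x : F.W) :
    BTruth F V x (blackDia ψ) ↔ ∃ y, tickRel F V x y ∧ BTruth F V y ψ := by
  simp only [bTruth_blackDia, bTruth_or_dia, tickRel]
  constructor
  · rintro ⟨z, hxz, hflip, y, hzy, hy⟩
    exact ⟨y, ⟨z, hxz, hflip, hzy⟩, hy⟩
  · rintro ⟨y, ⟨z, hxz, hflip, hzy⟩, hy⟩
    exact ⟨z, hxz, hflip, y, hzy, hy⟩
end

section
/- Let F0 be a transitive weakly connected unimodal frame (a frame for K4.3) that contains an (ω+1,>)-type chain, and let F1 be a countably infinite one-step rooted frame. Then the formula φ∞• is satisfiable in the product 2-frame F0 × F1. -/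
set_option linter.unusedVariables false

/-! ### The formula `φ∞` -/

/-- The propositional variable `p`. -/
def pV : BForm := .var 0

/-- The formula `φ∞`: the conjunction of
`◇1◇0(p ∧ □0⊥)`,
`□1(◇0 p → ◇0(◇0 p ∧ □0□0¬p))`, and
`□0(◇1(◇0 p ∧ □0□0¬p) → ◇1(p ∧ □0¬p ∧ □0□0¬p))`. -/
def phiInf : BForm :=
  .and (.dia 1 (.dia 0 (.and pV (.box 0 .bot))))
    (.and
      (.box 1 (.imp (.dia 0 pV)
        (.dia 0 (.and (.dia 0 pV) (.box 0 (.box 0 (.neg pV)))))))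
      (.box 0 (.imp
        (.dia 1 (.and (.dia 0 pV) (.box 0 (.box 0 (.neg pV)))))
        (.dia 1 (.and pV (.and (.box 0 (.neg pV)) (.box 0 (.box 0 (.neg pV)))))))))

/-- The formula `φ∞•`: the conjunction of the tick axiom with the conjuncts of `φ∞`,
where every `◇0` is replaced by `◆0` and every `□0` by `■0`. -/
def phiInfBullet : BForm :=
  .and tickAx
    (.and (.dia 1 (blackDia (.and pV (blackBox .bot))))
      (.and
        (.box 1 (.imp (blackDia pV)
          (blackDia (.and (blackDia pV) (blackBox (blackBox (.neg pV)))))))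
        (blackBox (.imp
          (.dia 1 (.and (blackDia pV) (blackBox (blackBox (.neg pV)))))
          (.dia 1 (.and pV (.and (blackBox (.neg pV)) (blackBox (blackBox (.neg pV))))))))))

/-! Rank each point `u` of `F0` by the number of chain points `x 0, x 1, …` that it sees
strictly, so that `x k` has rank `k` and `x ⊤` rank `ω`, and let `t` hold where the rank is odd
or `ω`. By transitivity an `R0`-step never raises the rank and a step that flips `t` lowers it, so
the tick relation behind `◆0` and `■0` strictly lowers the rank, and from rank `s` it reaches
every `x k` with `k < s`. With an injective enumeration `f` of successors of the root `r` of `F1`,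
let `p` hold at `(u, f n)` iff `u` has rank `n`; within a column, `p` is then isolated along the
tick relation. At `(x ⊤, r)`, a `p`-point of rank `n` in column `f n` is answered by `x (n + 1)`,
and a `■0`-successor of rank `s` sees along `R1` the `p`-point `(u, f s)`. -/

open Function

section Semantics

variable {F : Frame2} {V : ℕ → F.W → Prop} {w : F.W} {φ ψ : BForm}

theorem BTruth_neg : BTruth F V w φ.neg ↔ ¬ BTruth F V w φ := Iff.rfl

theorem BTruth_and : BTruth F V w (φ.and ψ) ↔ BTruth F V w φ ∧ BTruth F V w ψ := by
  simp only [BForm.and, BTruth_neg, BTruth]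
  tauto

theorem BTruth_or : BTruth F V w (φ.or ψ) ↔ BTruth F V w φ ∨ BTruth F V w ψ := by
  simp only [BForm.or, BTruth_neg, BTruth]
  tauto

theorem BTruth_imp : BTruth F V w (.imp φ ψ) ↔ (BTruth F V w φ → BTruth F V w ψ) := Iff.rfl

theorem BTruth_dia {i : Fin 2} : BTruth F V w (.dia i φ) ↔ ∃ v, F.R i w v ∧ BTruth F V v φ := by
  simp [BForm.dia, BTruth_neg, BTruth]

theorem BTruth_blackDia :
    BTruth F V w (blackDia ψ) ↔ ∃ y, tickRel F V w y ∧ BTruth F V y ψ := by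
  have hrearrange : (∃ z, F.R 0 w z ∧ (BTruth F V w tV ↔ ¬ BTruth F V z tV) ∧
      (BTruth F V z ψ ∨ ∃ y, F.R 0 z y ∧ BTruth F V y ψ)) ↔
      ∃ y, tickRel F V w y ∧ BTruth F V y ψ := by
    constructor
    · rintro ⟨z, hwz, hflip, hz | ⟨y, hzy, hy⟩⟩
      · exact ⟨z, ⟨z, hwz, hflip, .inl rfl⟩, hz⟩
      · exact ⟨y, ⟨z, hwz, hflip, .inr hzy⟩, hy⟩
    · rintro ⟨y, ⟨z, hwz, hflip, rfl | hzy⟩, hy⟩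
      · exact ⟨z, hwz, hflip, .inl hy⟩
      · exact ⟨z, hwz, hflip, .inr ⟨y, hzy, hy⟩⟩
  rw [← hrearrange]
  by_cases ht : BTruth F V w tV <;>
    simp [blackDia, BTruth_and, BTruth_or, BTruth_dia, BTruth_neg, BTruth_imp, ht]

theorem BTruth_blackBox :
    BTruth F V w (blackBox ψ) ↔ ∀ y, tickRel F V w y → BTruth F V y ψ := by
  simp [blackBox, BTruth_neg, BTruth_blackDia]

end Semantics

theorem prodFrame_R_zero {F0 F1 : Frame1} {a b : (prodFrame F0 F1).W} :
    (prodFrame F0 F1).R 0 a b ↔ F0.R a.1 b.1 ∧ a.2 = b.2 := by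
  simp [prodFrame]

theorem prodFrame_R_one {F0 F1 : Frame1} {a b : (prodFrame F0 F1).W} :
    (prodFrame F0 F1).R 1 a b ↔ F1.R a.2 b.2 ∧ a.1 = b.1 := by
  simp [prodFrame]

theorem WithTop.le_of_forall_coe_lt {α : Type*} [LinearOrder α] {a b : WithTop α}
    (h : ∀ n : α, (n : WithTop α) < a → (n : WithTop α) < b) : a ≤ b :=
  le_of_forall_lt fun c hc => by
    lift c to α using hc.ne_top
    exact h c hc

theorem WithTop.le_coe_of_lt_coe_succ {a : WithTop ℕ} {n : ℕ}
    (h : a < ((n + 1 : ℕ) : WithTop ℕ)) : a ≤ n := by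
  lift a to ℕ using h.ne_top
  exact WithTop.coe_le_coe.mpr (Nat.le_of_lt_succ (WithTop.coe_lt_coe.mp h))

def OddOrTop (k : WithTop ℕ) : Prop := ∀ n : ℕ, k = n → Odd n

theorem oddOrTop_coe {n : ℕ} : OddOrTop n ↔ Odd n :=
  ⟨fun h => h n rfl, fun h m hm => (show n = m by exact_mod_cast hm) ▸ h⟩

section ChainRank

variable {W : Type*} {R : W → W → Prop} {x : WithTop ℕ → W} {u z : W}

def IsOmegaSuccChain (R : W → W → Prop) (x : WithTop ℕ → W) : Prop :=
  ∀ n m : WithTop ℕ, n ≠ m → (R (x n) (x m) ↔ m < n)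

theorem IsOmegaSuccChain.rel_and_not_rel_iff (hx : IsOmegaSuccChain R x) (n m : WithTop ℕ) :
    R (x n) (x m) ∧ ¬ R (x m) (x n) ↔ m < n := by
  rcases eq_or_ne n m with rfl | hnm
  · simp
  · rw [hx n m hnm, hx m n hnm.symm, not_lt]
    exact ⟨fun h => h.1, fun h => ⟨h, h.le⟩⟩

noncomputable def chainRank (R : W → W → Prop) (x : WithTop ℕ → W) (u : W) : WithTop ℕ :=
  ⨅ (n : ℕ) (_ : ¬ (R u (x n) ∧ ¬ R (x n) u)), (n : WithTop ℕ)

theorem coe_lt_chainRank_iff (ht : Transitive R) (hx : IsOmegaSuccChain R x) {n : ℕ} :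
    (n : WithTop ℕ) < chainRank R x u ↔ R u (x n) ∧ ¬ R (x n) u := by
  have below_of_below : ∀ {m k : ℕ}, m ≤ k → R u (x k) ∧ ¬ R (x k) u →
      R u (x m) ∧ ¬ R (x m) u := by
    intro m k hmk hk
    rcases hmk.lt_or_eq with hmk | rfl
    · have hkm := (hx.rel_and_not_rel_iff k m).mpr (by exact_mod_cast hmk)
      exact ⟨ht hk.1 hkm.1, fun hmu => hkm.2 (ht hmu hk.1)⟩
    · exact hk
  constructor
  · intro hn
    by_contra hnot
    exact (iInf₂_le n hnot : chainRank R x u ≤ n).not_gt hn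
  · intro hn
    refine (WithTop.coe_lt_coe.mpr n.lt_succ_self).trans_le (le_iInf₂ fun m hm => ?_)
    exact WithTop.coe_le_coe.mpr (not_le.mp fun hmn => hm (below_of_below hmn hn))

theorem chainRank_le_of_rel (ht : Transitive R) (hx : IsOmegaSuccChain R x) (huz : R u z) :
    chainRank R x z ≤ chainRank R x u :=
  WithTop.le_of_forall_coe_lt fun n hn => by
    obtain ⟨hzn, hnz⟩ := (coe_lt_chainRank_iff ht hx).mp hn
    exact (coe_lt_chainRank_iff ht hx).mpr ⟨ht huz hzn, fun hnu => hnz (ht hnu huz)⟩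

theorem chainRank_apply (ht : Transitive R) (hx : IsOmegaSuccChain R x) (k : WithTop ℕ) :
    chainRank R x (x k) = k := by
  have h (n : ℕ) : (n : WithTop ℕ) < chainRank R x (x k) ↔ n < k := by
    rw [coe_lt_chainRank_iff ht hx, hx.rel_and_not_rel_iff]
  exact le_antisymm (WithTop.le_of_forall_coe_lt fun n => (h n).mp)
    (WithTop.le_of_forall_coe_lt fun n => (h n).mpr)

theorem coe_lt_chainRank_top (ht : Transitive R) (hx : IsOmegaSuccChain R x) (k : ℕ) :
    (k : WithTop ℕ) < chainRank R x (x ⊤) := by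
  rw [chainRank_apply ht hx]
  exact WithTop.coe_lt_top k

theorem rel_chain_of_coe_lt_chainRank (ht : Transitive R) (hx : IsOmegaSuccChain R x) {n : ℕ}
    (hn : (n : WithTop ℕ) < chainRank R x u) : R u (x n) :=
  ((coe_lt_chainRank_iff ht hx).mp hn).1

theorem chainRank_lt_of_flip (ht : Transitive R) (hx : IsOmegaSuccChain R x) (huz : R u z)
    (hflip : OddOrTop (chainRank R x u) ↔ ¬ OddOrTop (chainRank R x z)) :
    chainRank R x z < chainRank R x u :=
  (chainRank_le_of_rel ht hx huz).lt_of_ne fun h => iff_not_self (h ▸ hflip)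

theorem exists_flip_to_chain (ht : Transitive R) (hx : IsOmegaSuccChain R x) {k : ℕ}
    (hk : (k : WithTop ℕ) < chainRank R x u) :
    ∃ z, R u z ∧ (OddOrTop (chainRank R x u) ↔ ¬ OddOrTop (chainRank R x z)) ∧
      (z = x k ∨ R z (x k)) := by
  by_cases hflip : OddOrTop (chainRank R x u) ↔ ¬ OddOrTop k
  · exact ⟨x k, rel_chain_of_coe_lt_chainRank ht hx hk, by rwa [chainRank_apply ht hx], .inl rfl⟩
  have hparity : OddOrTop ((k + 1 : ℕ) : WithTop ℕ) ↔ ¬ OddOrTop k := by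
    rw [oddOrTop_coe, oddOrTop_coe, Nat.odd_add_one]
  -- the rank of `u` has the parity of `k`, so it is not `k + 1`
  have hk1 : ((k + 1 : ℕ) : WithTop ℕ) < chainRank R x u := by
    cases hu : chainRank R x u with
    | top => exact WithTop.coe_lt_top _
    | coe s =>
      rw [hu] at hk hflip
      rcases (Nat.succ_le_of_lt (WithTop.coe_lt_coe.mp hk)).lt_or_eq with h | rfl
      · exact WithTop.coe_lt_coe.mpr h
      · exact absurd hparity hflip
  refine ⟨x (k + 1 : ℕ), rel_chain_of_coe_lt_chainRank ht hx hk1, ?_, .inr ?_⟩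
  · rw [chainRank_apply ht hx, hparity]
    tauto
  · exact (hx _ _ (by simp)).mpr (WithTop.coe_lt_coe.mpr k.lt_succ_self)

end ChainRank

namespace PhiInfModel

variable {F0 F1 : Frame1} {x : WithTop ℕ → F0.W} {f : ℕ → F1.W}

def val (x : WithTop ℕ → F0.W) (f : ℕ → F1.W) : ℕ → (prodFrame F0 F1).W → Prop
  | 0, w => ∃ n : ℕ, chainRank F0.R x w.1 = n ∧ w.2 = f n
  | 1, w => OddOrTop (chainRank F0.R x w.1)
  | _, _ => False

theorem tickAx_holds (w : (prodFrame F0 F1).W) :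
    BTruth (prodFrame F0 F1) (val x f) w tickAx := by
  have tV_iff_of_one_step {a b : (prodFrame F0 F1).W} (hab : (prodFrame F0 F1).R 1 a b) :
      BTruth (prodFrame F0 F1) (val x f) a tV ↔
        BTruth (prodFrame F0 F1) (val x f) b tV := by
    show OddOrTop (chainRank F0.R x a.1) ↔ OddOrTop (chainRank F0.R x b.1)
    rw [(prodFrame_R_one.mp hab).2]
  have tick (a : (prodFrame F0 F1).W) : BTruth (prodFrame F0 F1) (val x f) a
      (.imp (.or tV (.dia 1 tV)) (.and tV (.box 1 tV))) := fun h => by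
    have ha : BTruth (prodFrame F0 F1) (val x f) a tV := by
      rcases BTruth_or.mp h with ha | hb
      · exact ha
      · obtain ⟨b, hab, hb⟩ := BTruth_dia.mp hb
        exact (tV_iff_of_one_step hab).mpr hb
    exact BTruth_and.mpr ⟨ha, fun b hab => (tV_iff_of_one_step hab).mp ha⟩
  exact BTruth_and.mpr ⟨tick w, fun w' _ => tick w'⟩

variable (ht : Transitive F0.R) (hx : IsOmegaSuccChain F0.R x)
include ht hx

theorem chainRank_lt_of_tickRel {w y : (prodFrame F0 F1).W}
    (h : tickRel (prodFrame F0 F1) (val x f) w y) :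
    chainRank F0.R x y.1 < chainRank F0.R x w.1 ∧ y.2 = w.2 := by
  obtain ⟨z, hwz, hflip, hzy⟩ := h
  rw [prodFrame_R_zero] at hwz
  have hz := chainRank_lt_of_flip ht hx hwz.1 hflip
  rcases hzy with rfl | hzy
  · exact ⟨hz, hwz.2.symm⟩
  · rw [prodFrame_R_zero] at hzy
    exact ⟨(chainRank_le_of_rel ht hx hzy.1).trans_lt hz, hzy.2.symm.trans hwz.2.symm⟩

theorem tickRel_chain {u : F0.W} {v : F1.W} {k : ℕ} (hk : (k : WithTop ℕ) < chainRank F0.R x u) :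
    tickRel (prodFrame F0 F1) (val x f) (u, v) (x k, v) := by
  obtain ⟨z, huz, hflip, hzk⟩ := exists_flip_to_chain ht hx hk
  refine ⟨(z, v), prodFrame_R_zero.mpr ⟨huz, rfl⟩, hflip, ?_⟩
  rcases hzk with rfl | hzk
  · exact .inl rfl
  · exact .inr (prodFrame_R_zero.mpr ⟨hzk, rfl⟩)

omit ht hx in
theorem pV_iff (hf : Injective f) {u : F0.W} {n : ℕ} :
    BTruth (prodFrame F0 F1) (val x f) (u, f n) pV ↔ chainRank F0.R x u = n := by
  refine ⟨fun ⟨m, hm, hfm⟩ => ?_, fun h => ⟨n, h, rfl⟩⟩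
  rwa [hf hfm]

theorem blackBox_neg_pV (hf : Injective f) {u : F0.W} {n : ℕ} (h : chainRank F0.R x u ≤ n) :
    BTruth (prodFrame F0 F1) (val x f) (u, f n) (blackBox (.neg pV)) := by
  refine BTruth_blackBox.mpr fun ⟨y, v⟩ hy => ?_
  obtain ⟨hlt, rfl⟩ := chainRank_lt_of_tickRel ht hx hy
  exact BTruth_neg.mpr fun hp => (hlt.trans_le h).ne ((pV_iff hf).mp hp)

theorem blackBox_blackBox_neg_pV (hf : Injective f) {u : F0.W} {n : ℕ}
    (h : chainRank F0.R x u ≤ (n + 1 : ℕ)) :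
    BTruth (prodFrame F0 F1) (val x f) (u, f n) (blackBox (blackBox (.neg pV))) := by
  refine BTruth_blackBox.mpr fun ⟨y, v⟩ hy => ?_
  obtain ⟨hlt, rfl⟩ := chainRank_lt_of_tickRel ht hx hy
  exact blackBox_neg_pV ht hx hf (WithTop.le_coe_of_lt_coe_succ (hlt.trans_le h))

variable {r : F1.W} (hf : Injective f) (hr : ∀ n, F1.R r (f n))
include hf hr

theorem conj1_holds :
    BTruth (prodFrame F0 F1) (val x f) (x ⊤, r) (.dia 1 (blackDia (.and pV (blackBox .bot)))) := by
  have dead_end : BTruth (prodFrame F0 F1) (val x f) (x (0 : ℕ), f 0) (blackBox .bot) :=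
    BTruth_blackBox.mpr fun y hy => by
      have hlt := (chainRank_lt_of_tickRel ht hx hy).1
      simp [chainRank_apply ht hx] at hlt
  refine BTruth_dia.mpr ⟨(x ⊤, f 0), prodFrame_R_one.mpr ⟨hr 0, rfl⟩, ?_⟩
  refine BTruth_blackDia.mpr ⟨_, tickRel_chain ht hx (coe_lt_chainRank_top ht hx 0), ?_⟩
  exact BTruth_and.mpr ⟨(pV_iff hf).mpr (chainRank_apply ht hx _), dead_end⟩

omit hr in
theorem conj2_holds : BTruth (prodFrame F0 F1) (val x f) (x ⊤, r)
    (.box 1 (.imp (blackDia pV) (blackDia (.and (blackDia pV) (blackBox (blackBox (.neg pV))))))) := by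
  rintro ⟨u, v⟩ huv hp
  obtain rfl : x ⊤ = u := (prodFrame_R_one.mp huv).2
  obtain ⟨⟨y, v'⟩, hy, n, -, hv'⟩ := BTruth_blackDia.mp hp
  obtain rfl : v' = v := (chainRank_lt_of_tickRel ht hx hy).2
  obtain rfl : v' = f n := hv'
  refine BTruth_blackDia.mpr ⟨_, tickRel_chain ht hx (coe_lt_chainRank_top ht hx (n + 1)), ?_⟩
  have hrank : chainRank F0.R x (x (n + 1 : ℕ)) = (n + 1 : ℕ) := chainRank_apply ht hx _
  refine BTruth_and.mpr ⟨BTruth_blackDia.mpr ⟨_, tickRel_chain ht hx (k := n) ?_, ?_⟩,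
    blackBox_blackBox_neg_pV ht hx hf hrank.le⟩
  · rw [hrank]
    exact WithTop.coe_lt_coe.mpr n.lt_succ_self
  · exact (pV_iff hf).mpr (chainRank_apply ht hx _)

theorem conj3_holds : BTruth (prodFrame F0 F1) (val x f) (x ⊤, r)
    (blackBox (.imp
      (.dia 1 (.and (blackDia pV) (blackBox (blackBox (.neg pV)))))
      (.dia 1 (.and pV (.and (blackBox (.neg pV)) (blackBox (blackBox (.neg pV)))))))) := by
  refine BTruth_blackBox.mpr fun ⟨u, v⟩ huv _ => ?_
  obtain ⟨hlt, rfl⟩ := chainRank_lt_of_tickRel ht hx huv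
  obtain ⟨s, hs⟩ := WithTop.ne_top_iff_exists.mp hlt.ne_top
  refine BTruth_dia.mpr ⟨(u, f s), prodFrame_R_one.mpr ⟨hr s, rfl⟩, ?_⟩
  refine BTruth_and.mpr ⟨(pV_iff hf).mpr hs.symm, BTruth_and.mpr ⟨?_, ?_⟩⟩
  · exact blackBox_neg_pV ht hx hf hs.ge
  · exact blackBox_blackBox_neg_pV ht hx hf (hs.ge.trans (WithTop.coe_le_coe.mpr s.le_succ))

theorem phiInfBullet_holds : BTruth (prodFrame F0 F1) (val x f) (x ⊤, r) phiInfBullet :=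
  BTruth_and.mpr ⟨tickAx_holds _, BTruth_and.mpr ⟨conj1_holds ht hx hf hr,
    BTruth_and.mpr ⟨conj2_holds ht hx hf, conj3_holds ht hx hf hr⟩⟩⟩

end PhiInfModel

theorem Infinite.exists_injective_nat_ne {α : Type*} [Infinite α] (a : α) :
    ∃ f : ℕ → α, Injective f ∧ ∀ n, f n ≠ a := by
  have hs : ({a}ᶜ : Set α).Infinite := (Set.finite_singleton a).infinite_compl
  exact ⟨fun n => hs.natEmbedding _ n, Subtype.val_injective.comp (hs.natEmbedding _).injective,
    fun n => (hs.natEmbedding _ n).2⟩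

theorem phiInfBullet_sat_in_product_general (F0 : Frame1)
    (ht : Transitive F0.R)
    (hchain : ContainsOmegaSuccChain F0)
    (F1 : Frame1) (hinf : Infinite F1.W)
    (hroot : OneStepRooted F1) :
    ∃ V w, BTruth (prodFrame F0 F1) V w phiInfBullet := by
  obtain ⟨x, -, hx⟩ := hchain
  obtain ⟨r, hr⟩ := hroot
  obtain ⟨f, hf, hfr⟩ := Infinite.exists_injective_nat_ne r
  exact ⟨_, _, PhiInfModel.phiInfBullet_holds ht hx hf fun n => hr _ (hfr n)⟩

/-- **Lemma 4.** If `F0` is a transitive weakly connected frame containing an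
`(ω+1, >)`-type chain and `F1` is a countably infinite one-step rooted frame, then
`φ∞•` is satisfiable in `F0 × F1`. -/
theorem phiInfBullet_sat_in_product (F0 : Frame1)
    (ht : Transitive F0.R) (hwc : WeaklyConnected F0.R)
    (hchain : ContainsOmegaSuccChain F0)
    (F1 : Frame1) (hcount : Countable F1.W) (hinf : Infinite F1.W)
    (hroot : OneStepRooted F1) :
    ∃ V w, BTruth (prodFrame F0 F1) V w phiInfBullet :=
  phiInfBullet_sat_in_product_general F0 ht hchain F1 hinf hroot
end
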